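/- arXiv:math/0409339 — 3 statements merged into one kernel-verified Lean document; each statement's English description precedes it below -/
import Mathlib

section
/- Let s, t : G → H be group homomorphisms admitting a common section i : H → G (i.e. s ∘ i = id_H and t ∘ i = id_H). Then t(ker s) is a normal subgroup of H, and the quotient map H → H / t(ker s) is a coequalizer of s and t in the category of groups. -/
/-- If `s, t : G → H` admit a common section `i`, then `t(ker s)` is normal in `H`
and the quotient map `H → H / t(ker s)` is a coequalizer of `s` and `t` in the
category of groups. -/
theorem stmt7 {G H : Type*} [Group G] [Group H] (s t : G →* H) (i : H →* G)
    (hs : ∀ h, s (i h) = h) (ht : ∀ h, t (i h) = h) :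
    (Subgroup.map t s.ker).Normal ∧
    ∀ [hn : (Subgroup.map t s.ker).Normal] (K : Type*) [Group K] (f : H →* K),
      f.comp s = f.comp t →
      ∃! g : H ⧸ Subgroup.map t s.ker →* K,
        g.comp (QuotientGroup.mk' (Subgroup.map t s.ker)) = f := by
  constructor
  · constructor
    intro n hn h
    obtain ⟨x, hx, rfl⟩ := hn
    refine ⟨i h * x * (i h)⁻¹, ?_, ?_⟩
    · have hx' : s x = 1 := hx
      have : s (i h * x * (i h)⁻¹) = 1 := by simp [hs, hx']
      exact this
    · simp [ht]
  · intro hn K _ f hf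
    have hker : Subgroup.map t s.ker ≤ f.ker := by
      rintro _ ⟨x, hx, rfl⟩
      have := DFunLike.congr_fun hf x
      simp only [MonoidHom.comp_apply] at this
      simp only [MonoidHom.mem_ker] at hx ⊢
      rw [← this, hx, map_one]
    refine ⟨QuotientGroup.lift _ f hker, ?_, ?_⟩
    · ext x; rfl
    · intro g hg
      apply QuotientGroup.monoidHom_ext
      rw [hg]
      ext x
      rfl
end

section
/- Let (G, C, δ) be a precrossed module of groups and consider the graph on object set G whose arrows from g to δ(c)g are pairs (c, g) with c ∈ C, with composition defined by (c', δ(c)g) ∘ (c, g) = (c' c, g). Then the interchange law ((c₂', g₂') ∘ (c₂, g₂)) · ((c₁', g₁') ∘ (c₁, g₁)) = ((c₂', g₂')·(c₁', g₁')) ∘ ((c₂, g₂)·(c₁, g₁)) (where · is the semidirect product multiplication (c,g)(c',g') = (c·(g • c'), gg')) holds for all composable pairs if and only if the Peiffer identity δ(c) • c' = c c' c⁻¹ holds for all c, c' ∈ C. -/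
/-- Composition of arrows `(c', δ(c)g) ∘ (c, g) = (c' c, g)` in the graph associated
to a precrossed module; an arrow `(c, g)` goes from `g` to `δ(c) g`. -/
def sdComp {G C : Type*} [Group G] [Group C] [MulDistribMulAction G C]
    (p q : C ⋊[MulDistribMulAction.toMulAut G C] G) :
    C ⋊[MulDistribMulAction.toMulAut G C] G :=
  ⟨p.left * q.left, q.right⟩

/-- For a precrossed module `(G, C, δ)`, the interchange law between the semidirect
product multiplication and the composition of arrows holds (for all composable
pairs) if and only if the Peiffer identity holds. -/
theorem stmt11 {G C : Type*} [Group G] [Group C] [MulDistribMulAction G C]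
    (δ : C →* G)
    (hequiv : ∀ (g : G) (c : C), δ (g • c) = g * δ c * g⁻¹) :
    (∀ a₁ a₁' a₂ a₂' : C ⋊[MulDistribMulAction.toMulAut G C] G,
        a₁'.right = δ a₁.left * a₁.right →
        a₂'.right = δ a₂.left * a₂.right →
        sdComp a₂' a₂ * sdComp a₁' a₁ = sdComp (a₂' * a₁') (a₂ * a₁))
      ↔ (∀ c c' : C, δ c • c' = c * c' * c⁻¹) := by
  constructor
  · intro h c c'
    have := h ⟨1, 1⟩ ⟨c', 1⟩ ⟨c, 1⟩ ⟨1, δ c⟩ (by simp) (by simp)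
    have hl := congrArg SemidirectProduct.left this
    simp [sdComp, SemidirectProduct.mul_left] at hl
    rw [hl]
    group
  · intro h a₁ a₁' a₂ a₂' h1 h2
    ext
    · simp only [sdComp, SemidirectProduct.mul_left, h2]
      simp [smul_mul', mul_smul, h (a₂.left) (a₂.right • a₁'.left), mul_assoc]
    · simp [sdComp, SemidirectProduct.mul_right]
end

section
/- Let G₁, G₀ be groups with homomorphisms s, t : G₁ → G₀ and a common section i : G₀ → G₁ (s ∘ i = t ∘ i = id). If m is a partial operation making (G₀, G₁, s, t, i, m) an internal category in the category of groups (i.e. m : G₁ ×_{G₀} G₁ → G₁ is a group homomorphism on the pullback of s and t satisfying the category axioms with identities i), then m is uniquely determined: m(g, h) = g · i(s(g))⁻¹ · h whenever s(g) = t(h). -/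
/-- In an internal category in the category of groups, the composition `m` is
uniquely determined: `m(g, h) = g · i(s(g))⁻¹ · h` whenever `s(g) = t(h)`. -/
theorem stmt12 {G₀ G₁ : Type*} [Group G₀] [Group G₁]
    (s t : G₁ →* G₀) (i : G₀ →* G₁)
    (hsi : ∀ x, s (i x) = x) (hti : ∀ x, t (i x) = x)
    (m : ∀ g h : G₁, s g = t h → G₁)
    (hsrc : ∀ g h hgh, s (m g h hgh) = s h)
    (htgt : ∀ g h hgh, t (m g h hgh) = t g)
    -- m is a group homomorphism on the pullback of s and t
    (hmul : ∀ g h g' h' (hgh : s g = t h) (hg'h' : s g' = t h'),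
      m (g * g') (h * h') (by simp only [map_mul, hgh, hg'h']) =
        m g h hgh * m g' h' hg'h')
    -- unit laws
    (hidl : ∀ h : G₁, m (i (t h)) h (hsi (t h)) = h)
    (hidr : ∀ g : G₁, m g (i (s g)) (by rw [hti]) = g)
    -- associativity
    (hassoc : ∀ g h k (h1 : s g = t h) (h2 : s h = t k),
      m (m g h h1) k (by rw [hsrc]; exact h2) =
        m g (m h k h2) (by rw [htgt]; exact h1)) :
    ∀ g h (hgh : s g = t h), m g h hgh = g * (i (s g))⁻¹ * h := by
  have mcongr : ∀ g g' h h' : G₁, ∀ (hg : g = g') (hh : h = h')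
      (p : s g = t h) (p' : s g' = t h'), m g h p = m g' h' p' := by
    intro g g' h h' hg hh p p'
    subst hg; subst hh; rfl
  intro g h hgh
  have ht1 : t ((i (s g))⁻¹ * h) = 1 := by
    simp [hti, hgh]
  have hs1 : s (1 : G₁) = t ((i (s g))⁻¹ * h) := by simp [ht1]
  have hgi : s g = t (i (s g)) := (hti _).symm
  have key := hmul g (i (s g)) 1 ((i (s g))⁻¹ * h) hgi hs1
  rw [mcongr (g * 1) g (i (s g) * ((i (s g))⁻¹ * h)) h (mul_one g)
    (mul_inv_cancel_left _ _) _ hgh] at key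
  have e2 : m 1 ((i (s g))⁻¹ * h) hs1 = (i (s g))⁻¹ * h :=
    (mcongr _ _ _ _ (by rw [ht1, map_one]) rfl _ _).trans (hidl _)
  rw [key, hidr, e2, mul_assoc]
end
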